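/- Let $G(x) = \sum_{i\ge1} a_i x^i \in \widehat{\mathbb{Q}}[[x]]$ with $(\partial G)(x,y) = G(x+y-xy)-G(x)-G(y)$ having all coefficients in $\widehat{\mathbb{Z}}$. Let $n > 1$ and suppose $a_i \in \widehat{\mathbb{Z}}$ for all $i < n$. If $p^t$ is a prime power with $p^t < n$ and $p^t \mid n$, then $p^t$ divides $b_n := n a_n$ in $\widehat{\mathbb{Z}}$. -/

import Mathlib

open TensorProduct

/-- The ring of profinite integers `Ẑ = lim ℤ/nℤ`, realized as the subring of
`∀ n : ℕ+, ZMod n` consisting of compatible families. -/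
def ZHatSubring : Subring (∀ n : ℕ+, ZMod n) where
  carrier := {f | ∀ (d n : ℕ+) (h : (d : ℕ) ∣ (n : ℕ)), ZMod.castHom h (ZMod d) (f n) = f d}
  zero_mem' := by intro d n h; simp
  one_mem' := by intro d n h; simp only [Pi.one_apply, map_one]
  add_mem' := by intro a b ha hb d n h; simp [map_add, ha d n h, hb d n h]
  mul_mem' := by intro a b ha hb d n h; simp [map_mul, ha d n h, hb d n h]
  neg_mem' := by intro a ha d n h; simp [map_neg, ha d n h]

/-- Profinite integers. -/
abbrev ZHat : Type := ZHatSubring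

/-- `Q̂ = Ẑ ⊗ ℚ`. -/
abbrev QHat : Type := ℚ ⊗[ℤ] ZHat

/-- The canonical embedding `Ẑ → Q̂`. -/
noncomputable def toQHat : ZHat →+* QHat := Algebra.TensorProduct.includeRight.toRingHom

/-- Substitution of a multivariate power series with vanishing constant term into a
one-variable power series. -/
noncomputable def psubst {K : Type*} [CommRing K] {σ : Type*}
    (f : MvPowerSeries σ K) (G : PowerSeries K) : MvPowerSeries σ K :=
  fun d => ∑ n ∈ Finset.range ((d.sum fun _ e => e) + 1),
    PowerSeries.coeff (R := K) n G * MvPowerSeries.coeff (R := K) d (f ^ n)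

/-- The partial derivative `∂G(x,y) = G(x+y-xy) - G(x) - G(y) + G(0)` with respect to the
multiplicative formal group law. -/
noncomputable def deriv2 {K : Type*} [CommRing K] (G : PowerSeries K) :
    MvPowerSeries (Fin 2) K :=
  psubst (MvPowerSeries.X 0 + MvPowerSeries.X 1 - MvPowerSeries.X 0 * MvPowerSeries.X 1) G
    - psubst (MvPowerSeries.X 0) G - psubst (MvPowerSeries.X 1) G
    + MvPowerSeries.C (σ := Fin 2) (R := K) (PowerSeries.constantCoeff (R := K) G)

/-!
For `0 < j < n`, only the term `G(x + y - xy)` of `∂G` contributes to the coefficient of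
`x^j y^(n-j)`, and it contributes `∑_{m ≤ n} a_m [x^j y^(n-j)] (x + y - xy)^m`. The coefficients
of `(x + y - xy)^m` are integers, and for `m = n` this one is `C(n, j)`, since the degree-`n` part
of `(x + y - xy)^n` is `(x + y)^n`. Hence `C(n, j) a_n ∈ Ẑ`.

Write `n = p^t m`. Taking `j = 1` and `j = p^t`, and using `C(n, p^t) = m C(n-1, p^t-1)`, both
`p^t (m a_n)` and `C(n-1, p^t-1) (m a_n)` lie in `Ẑ`. By Lucas's theorem
`C(n-1, p^t-1) ≡ 1 [MOD p]`, so the two multipliers are coprime; thus `m a_n ∈ Ẑ` and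
`n a_n = p^t (m a_n)`.
-/

namespace Nat

theorem mul_sub_one_div_and_mod {p m : ℕ} (hp : 0 < p) (hm : 0 < m) :
    (p * m - 1) / p = m - 1 ∧ (p * m - 1) % p = p - 1 := by
  refine (Nat.div_mod_unique hp).mpr ⟨?_, by omega⟩
  obtain ⟨m, rfl⟩ := Nat.exists_eq_add_one_of_ne_zero hm.ne'
  rw [Nat.add_sub_cancel, mul_add_one]
  omega

theorem choose_mul_sub_one_modEq {p m k : ℕ} [Fact p.Prime] (hm : 0 < m) (hk : 0 < k) :
    (p * m - 1).choose (p * k - 1) ≡ (m - 1).choose (k - 1) [MOD p] := by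
  have hp : 0 < p := (Fact.out : p.Prime).pos
  obtain ⟨hm₁, hm₂⟩ := mul_sub_one_div_and_mod hp hm
  obtain ⟨hk₁, hk₂⟩ := mul_sub_one_div_and_mod hp hk
  simpa [hm₁, hm₂, hk₁, hk₂] using Choose.choose_modEq_choose_mod_mul_choose_div_nat
    (n := p * m - 1) (k := p * k - 1) (p := p)

theorem choose_pow_mul_sub_one_modEq_one {p : ℕ} [Fact p.Prime] (t : ℕ) {m : ℕ} (hm : 0 < m) :
    (p ^ t * m - 1).choose (p ^ t - 1) ≡ 1 [MOD p] := by
  induction t with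
  | zero => simp [Nat.ModEq.refl]
  | succ t ih =>
    have hp : 0 < p := (Fact.out : p.Prime).pos
    rw [pow_succ', mul_assoc]
    exact (choose_mul_sub_one_modEq (by positivity) (by positivity)).trans ih

theorem Prime.coprime_choose_pow_mul_sub_one {p : ℕ} (hp : p.Prime) (t : ℕ) {m : ℕ}
    (hm : 0 < m) : Coprime ((p ^ t * m - 1).choose (p ^ t - 1)) (p ^ t) := by
  have := Fact.mk hp
  refine Coprime.pow_right t (Coprime.symm ((hp.coprime_iff_not_dvd).mpr fun h => ?_))
  exact hp.not_dvd_one (((choose_pow_mul_sub_one_modEq_one t hm).dvd_iff dvd_rfl).mp h)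

theorem choose_mul_eq_mul_choose_sub_one {k : ℕ} (m : ℕ) (hk : 0 < k) :
    (k * m).choose k = m * (k * m - 1).choose (k - 1) := by
  rcases Nat.eq_zero_or_pos m with rfl | hm
  · simp [Nat.choose_eq_zero_of_lt hk]
  have h := add_one_mul_choose_eq (k * m - 1) (k - 1)
  rw [Nat.sub_add_cancel (Nat.mul_pos hk hm), Nat.sub_add_cancel hk] at h
  exact Nat.eq_of_mul_eq_mul_right hk (h.symm.trans (by ring))

end Nat

theorem Subring.mem_of_intCast_mul_mem_of_isCoprime {K : Type*} [CommRing K] (S : Subring K)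
    {a b : ℤ} (hab : IsCoprime a b) {x : K} (ha : (a : K) * x ∈ S) (hb : (b : K) * x ∈ S) :
    x ∈ S := by
  obtain ⟨u, v, huv⟩ := hab
  have hx : x = u * ((a : K) * x) + v * ((b : K) * x) := by
    rw [← mul_assoc, ← mul_assoc, ← add_mul, ← Int.cast_mul, ← Int.cast_mul, ← Int.cast_add, huv,
      Int.cast_one, one_mul]
  rw [hx]
  exact add_mem (mul_mem (intCast_mem S u) ha) (mul_mem (intCast_mem S v) hb)

section MulFormalGroupLaw

variable (R : Type*) [CommRing R]

noncomputable def mulFormalGroupLaw : MvPolynomial (Fin 2) R :=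
  MvPolynomial.X 0 + MvPolynomial.X 1 - MvPolynomial.X 0 * MvPolynomial.X 1

variable {R}

open MvPolynomial in
theorem coeff_mulFormalGroupLaw_pow_of_degree_eq {d : Fin 2 →₀ ℕ} {n : ℕ} (hd : d.degree = n) :
    coeff d (mulFormalGroupLaw R ^ n) = n.choose (d 0) := by
  rw [Finsupp.degree_eq_sum, Fin.sum_univ_two] at hd
  rw [mulFormalGroupLaw, sub_eq_add_neg, add_pow, coeff_sum,
    Finset.sum_eq_single_of_mem n (Finset.self_mem_range_succ n)]
  · simp [coeff_add_pow, hd]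
  intro k hk hkn
  have hhom : ((X 0 + X 1 : MvPolynomial (Fin 2) R) ^ k * (-(X 0 * X 1)) ^ (n - k)
      * (n.choose k : MvPolynomial (Fin 2) R)).IsHomogeneous (1 * k + 2 * (n - k) + 0) :=
    ((((isHomogeneous_X R 0).add (isHomogeneous_X R 1)).pow k).mul
      (((isHomogeneous_X R 0).mul (isHomogeneous_X R 1)).neg.pow _)).mul
      (by simpa using isHomogeneous_C (Fin 2) (n.choose k : R))
  refine hhom.coeff_eq_zero ?_
  rw [Finsupp.degree_eq_sum, Fin.sum_univ_two, hd]
  have := Finset.mem_range_succ_iff.mp hk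
  omega

theorem map_mulFormalGroupLaw {S : Type*} [CommRing S] (f : R →+* S) :
    MvPolynomial.map f (mulFormalGroupLaw R) = mulFormalGroupLaw S := by
  simp [mulFormalGroupLaw]

theorem coeff_mulFormalGroupLaw_pow_mem (S : Subring R) (d : Fin 2 →₀ ℕ) (m : ℕ) :
    MvPolynomial.coeff d (mulFormalGroupLaw R ^ m) ∈ S := by
  rw [← map_mulFormalGroupLaw (Int.castRingHom R), ← map_pow, MvPolynomial.coeff_map]
  exact intCast_mem S _

theorem coe_mulFormalGroupLaw :
    (mulFormalGroupLaw R : MvPowerSeries (Fin 2) R) =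
      MvPowerSeries.X 0 + MvPowerSeries.X 1 - MvPowerSeries.X 0 * MvPowerSeries.X 1 := by
  change MvPolynomial.coeToMvPowerSeries.ringHom (mulFormalGroupLaw R) = _
  rw [mulFormalGroupLaw, map_sub, map_add, map_mul]
  simp only [MvPolynomial.coeToMvPowerSeries.ringHom_apply, MvPolynomial.coe_X]

end MulFormalGroupLaw

section Deriv2

variable {K : Type*} [CommRing K]

theorem coeff_psubst {σ : Type*} (f : MvPowerSeries σ K) (G : PowerSeries K) (d : σ →₀ ℕ) :
    MvPowerSeries.coeff d (psubst f G) = ∑ m ∈ Finset.range (d.degree + 1),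
      PowerSeries.coeff m G * MvPowerSeries.coeff d (f ^ m) :=
  rfl

theorem coeff_psubst_X_eq_zero {σ : Type*} {i k : σ} (hki : k ≠ i) {d : σ →₀ ℕ} (hd : d k ≠ 0)
    (G : PowerSeries K) : MvPowerSeries.coeff d (psubst (MvPowerSeries.X i) G) = 0 := by
  classical
  refine (coeff_psubst _ G d).trans (Finset.sum_eq_zero fun m _ => ?_)
  rw [MvPowerSeries.coeff_X_pow, if_neg, mul_zero]
  rintro rfl
  simp [hki] at hd

theorem coeff_deriv2 (G : PowerSeries K) {d : Fin 2 →₀ ℕ} (h₀ : d 0 ≠ 0) (h₁ : d 1 ≠ 0) :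
    MvPowerSeries.coeff d (deriv2 G) = ∑ m ∈ Finset.range (d.degree + 1),
      PowerSeries.coeff m G * MvPolynomial.coeff d (mulFormalGroupLaw K ^ m) := by
  have hd : d ≠ 0 := fun h => h₀ (by simp [h])
  rw [deriv2, map_add, map_sub, map_sub, coeff_psubst_X_eq_zero one_ne_zero h₁,
    coeff_psubst_X_eq_zero zero_ne_one h₀, MvPowerSeries.coeff_C, if_neg hd, ← coe_mulFormalGroupLaw]
  simp only [coeff_psubst, ← MvPolynomial.coe_pow, MvPolynomial.coeff_coe, sub_zero, add_zero]

theorem choose_mul_coeff_mem (S : Subring K) {G : PowerSeries K}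
    (hint : ∀ d, MvPowerSeries.coeff d (deriv2 G) ∈ S) {n : ℕ}
    (ha : ∀ i < n, PowerSeries.coeff i G ∈ S) {j : ℕ} (hj : 0 < j) (hjn : j < n) :
    (n.choose j : K) * PowerSeries.coeff n G ∈ S := by
  set d : Fin 2 →₀ ℕ := Finsupp.single 0 j + Finsupp.single 1 (n - j)
  have hd₀ : d 0 = j := by simp [d]
  have hd₁ : d 1 = n - j := by simp [d]
  have hdeg : d.degree = n := by
    rw [Finsupp.degree_eq_sum, Fin.sum_univ_two, hd₀, hd₁]
    omega
  have hsum := coeff_deriv2 G (d := d) (by omega) (by omega)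
  rw [hdeg, Finset.sum_range_succ, coeff_mulFormalGroupLaw_pow_of_degree_eq hdeg, hd₀,
    mul_comm] at hsum
  rw [← add_sub_cancel_left (∑ m ∈ Finset.range n, _) ((n.choose j : K) * _), ← hsum]
  refine sub_mem (hint d) (sum_mem fun m hm => mul_mem (ha m (Finset.mem_range.mp hm)) ?_)
  exact coeff_mulFormalGroupLaw_pow_mem S d m

end Deriv2

theorem prime_pow_dvd_bn_general (G : PowerSeries QHat)
    (hint : ∀ d : Fin 2 →₀ ℕ, MvPowerSeries.coeff (R := QHat) d (deriv2 G) ∈ Set.range toQHat)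
    (n : ℕ)
    (ha : ∀ i : ℕ, i < n → PowerSeries.coeff (R := QHat) i G ∈ Set.range toQHat)
    (p t : ℕ) (hp : p.Prime) (hlt : p ^ t < n) (hdvd : p ^ t ∣ n) :
    ∃ c : ZHat, (n : QHat) * PowerSeries.coeff (R := QHat) n G = toQHat ((p : ZHat) ^ t * c) := by
  obtain ⟨m, rfl⟩ := hdvd
  have hpt : 0 < p ^ t := pow_pos hp.pos t
  have hm : 0 < m := Nat.pos_of_ne_zero (by rintro rfl; simp at hlt)
  have hn := choose_mul_coeff_mem toQHat.range hint ha one_pos (by omega)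
  have hchoose := choose_mul_coeff_mem toQHat.range hint ha hpt hlt
  rw [Nat.choose_one_right] at hn
  rw [Nat.choose_mul_eq_mul_choose_sub_one m hpt] at hchoose
  obtain ⟨c, hc⟩ := toQHat.range.mem_of_intCast_mul_mem_of_isCoprime
    (Nat.isCoprime_iff_coprime.mpr (hp.coprime_choose_pow_mul_sub_one t hm))
    (x := (m : QHat) * PowerSeries.coeff (p ^ t * m) G)
    (by convert hchoose using 1; push_cast; ring) (by convert hn using 1; push_cast; ring)
  exact ⟨c, by rw [map_mul, hc, map_pow, map_natCast]; push_cast; ring⟩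

/-- Let `G(x) = ∑_{i≥1} aᵢ xⁱ ∈ Q̂[[x]]` with `∂G` having all coefficients in `Ẑ`, let
`n > 1` and suppose `aᵢ ∈ Ẑ` for all `i < n`.  If `p^t` is a prime power with `p^t < n`
and `p^t ∣ n`, then `p^t` divides `b_n := n·a_n` in `Ẑ`. -/
theorem prime_pow_dvd_bn (G : PowerSeries QHat)
    (hG0 : PowerSeries.constantCoeff (R := QHat) G = 0)
    (hint : ∀ d : Fin 2 →₀ ℕ, MvPowerSeries.coeff (R := QHat) d (deriv2 G) ∈ Set.range toQHat)
    (n : ℕ) (hn : 1 < n)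
    (ha : ∀ i : ℕ, i < n → PowerSeries.coeff (R := QHat) i G ∈ Set.range toQHat)
    (p t : ℕ) (hp : p.Prime) (hlt : p ^ t < n) (hdvd : p ^ t ∣ n) :
    ∃ c : ZHat, (n : QHat) * PowerSeries.coeff (R := QHat) n G = toQHat ((p : ZHat) ^ t * c) :=
  prime_pow_dvd_bn_general G hint n ha p t hp hlt hdvd
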